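/- arXiv:1807.09077 — 8 statements merged into one kernel-verified Lean document; each statement's English description precedes it below -/
import Mathlib

section
/- For a stopping time τ on a finite sample space and for every c > 0 such that β(x^τ) = c for some x^τ compatible with τ, the likelihood ratio of the event {β(X^τ) = c} under H1 versus H0 equals c, i.e., P(β(X^τ)=c | H1)/P(β(X^τ)=c | H0) = c (calibration of the Bayes factor under optional stopping). -/
/-!
By the stopping property, `β` is constant on the prefix cylinder of length `τ x` around each `x`,
so `{β = c}` is a finite union of cylinders `C` with `P1 C = c * P0 C`, and the ratio passes to
the union. As `X` carries an arbitrary σ-algebra, the cylinders need not be measurable; their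
measurable hulls, built from measurable atoms, have the same measures and form a laminar family,
whose union is the disjoint union of its maximal members.
-/

open MeasureTheory Set
open scoped ENNReal

section MeasurableAtom

variable {Ω : Type*} [MeasurableSpace Ω]

theorem measure_le_of_subset_biUnion_measurableAtom (μ : Measure Ω) {s t : Set Ω}
    (h : t ⊆ ⋃ a ∈ s, measurableAtom a) : μ t ≤ μ s :=
  calc μ t ≤ μ (toMeasurable μ s) :=
        measure_mono <| h.trans <| iUnion₂_subset fun _ ha =>
          measurableAtom_subset (measurableSet_toMeasurable μ s) (subset_toMeasurable μ s ha)
    _ = μ s := measure_toMeasurable s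

theorem mem_measurableAtom_comm {x y : Ω} (h : y ∈ measurableAtom x) : x ∈ measurableAtom y := by
  rw [measurableAtom_eq_of_mem h]
  exact mem_measurableAtom_self x

theorem mem_measurableAtom_pi {ι : Type*} {X : ι → Type*} [∀ i, MeasurableSpace (X i)]
    {x y : ∀ i, X i} (h : ∀ i, y i ∈ measurableAtom (x i)) : y ∈ measurableAtom x := by
  let notSeparating : MeasurableSpace (∀ i, X i) :=
    { MeasurableSet' := fun s => x ∈ s ↔ y ∈ s
      measurableSet_empty := Iff.rfl
      measurableSet_compl := fun _ hs => not_iff_not.mpr hs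
      measurableSet_iUnion := fun _ hf => by
        simp only [mem_iUnion]
        exact exists_congr hf }
  have hle : MeasurableSpace.pi ≤ notSeparating := iSup_le fun i => by
    rintro s ⟨E, hE, rfl⟩
    exact ⟨fun hx => mem_of_mem_measurableAtom (h i) hE hx,
      fun hy => mem_of_mem_measurableAtom (mem_measurableAtom_comm (h i)) hE hy⟩
  simp only [measurableAtom, mem_iInter]
  exact fun s hxs hs => (hle s hs).mp hxs

open Classical in
theorem measure_biUnion_eq_sum_maximal (μ : Measure Ω) (F : Finset (Set Ω))
    (hF : ∀ A ∈ F, MeasurableSet A)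
    (hlam : ∀ A ∈ F, ∀ B ∈ F, ¬Disjoint A B → A ⊆ B ∨ B ⊆ A) :
    μ (⋃ A ∈ F, A) = ∑ A ∈ F.filter (Maximal (· ∈ F)), μ A := by
  have hunion : ⋃ A ∈ F, A = ⋃ A ∈ F.filter (Maximal (· ∈ F)), A := by
    refine subset_antisymm (iUnion₂_subset fun A hA => ?_)
      (biUnion_subset_biUnion_left fun A hA => (Finset.mem_filter.1 hA).1)
    obtain ⟨B, hAB, hB⟩ := F.exists_le_maximal hA
    exact hAB.trans (subset_biUnion_of_mem (u := id) (Finset.mem_filter.2 ⟨hB.prop, hB⟩))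
  rw [hunion]
  refine measure_biUnion_finset (fun A hA B hB hne => ?_)
    fun A hA => hF A (Finset.mem_filter.1 hA).1
  simp only [Finset.coe_filter, mem_ofPred_eq] at hA hB
  by_contra hd
  rcases hlam A hA.1 B hB.1 hd with hAB | hBA
  · exact hne (hA.2.eq_of_le hB.1 hAB)
  · exact hne (hB.2.eq_of_le hA.1 hBA).symm

end MeasurableAtom

section PrefixCylinder

variable {X : Type*} {T : ℕ}

def prefixCylinder (n : ℕ) (x : Fin T → X) : Set (Fin T → X) :=
  {ω | ∀ i : Fin T, (i : ℕ) < n → ω i = x i}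

/-- The measurable hull of `prefixCylinder n x`, which itself need not be measurable. -/
def prefixAtomCylinder [MeasurableSpace X] (n : ℕ) (x : Fin T → X) : Set (Fin T → X) :=
  {ω | ∀ i : Fin T, (i : ℕ) < n → ω i ∈ measurableAtom (x i)}

theorem mem_prefixCylinder_self (n : ℕ) (x : Fin T → X) : x ∈ prefixCylinder n x :=
  fun _ _ => rfl

theorem prefixCylinder_eq_of_mem {τ : (Fin T → X) → ℕ}
    (hτ : ∀ x y, y ∈ prefixCylinder (τ x) x → τ y = τ x) {x y : Fin T → X}
    (hy : y ∈ prefixCylinder (τ x) x) : prefixCylinder (τ y) y = prefixCylinder (τ x) x := by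
  ext ω
  simp only [prefixCylinder, mem_ofPred_eq, hτ x y hy]
  exact forall₂_congr fun i hi => ⟨fun h => h.trans (hy i hi), fun h => h.trans (hy i hi).symm⟩

variable [MeasurableSpace X]

theorem prefixCylinder_subset_prefixAtomCylinder (n : ℕ) (x : Fin T → X) :
    prefixCylinder n x ⊆ prefixAtomCylinder n x :=
  fun _ hω i hi => hω i hi ▸ mem_measurableAtom_self (x i)

theorem prefixAtomCylinder_subset_biUnion_measurableAtom (n : ℕ) (x : Fin T → X) :
    prefixAtomCylinder n x ⊆ ⋃ a ∈ prefixCylinder n x, measurableAtom a := by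
  intro ω hω
  refine mem_biUnion (x := fun i : Fin T => if (i : ℕ) < n then x i else ω i)
    (fun i hi => if_pos hi) (mem_measurableAtom_pi fun i => ?_)
  split_ifs with hi
  · exact hω i hi
  · exact mem_measurableAtom_self _

theorem measurableSet_prefixAtomCylinder [Countable X] (n : ℕ) (x : Fin T → X) :
    MeasurableSet (prefixAtomCylinder n x) := by
  simp only [prefixAtomCylinder, ofPred_forall]
  refine MeasurableSet.iInter fun i => MeasurableSet.iInter fun _ => ?_
  exact measurable_pi_apply i (MeasurableSet.measurableAtom_of_countable (x i))

theorem measure_prefixAtomCylinder (μ : Measure (Fin T → X)) (n : ℕ) (x : Fin T → X) :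
    μ (prefixAtomCylinder n x) = μ (prefixCylinder n x) :=
  le_antisymm
    (measure_le_of_subset_biUnion_measurableAtom μ
      (prefixAtomCylinder_subset_biUnion_measurableAtom n x))
    (measure_mono (prefixCylinder_subset_prefixAtomCylinder n x))

theorem prefixAtomCylinder_subset_of_le_of_not_disjoint {m n : ℕ} {x y : Fin T → X}
    (hmn : m ≤ n) (h : ¬Disjoint (prefixAtomCylinder m x) (prefixAtomCylinder n y)) :
    prefixAtomCylinder n y ⊆ prefixAtomCylinder m x := by
  obtain ⟨z, hzx, hzy⟩ := not_disjoint_iff.1 h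
  intro ω hω i hi
  rw [← measurableAtom_eq_of_mem (hzx i hi), measurableAtom_eq_of_mem (hzy i (hi.trans_le hmn))]
  exact hω i (hi.trans_le hmn)

theorem measure_eq_mul_of_prefixCylinder_subset [Finite X] (μ₀ μ₁ : Measure (Fin T → X))
    (τ : (Fin T → X) → ℕ) {S : Set (Fin T → X)} {c : ℝ≥0∞}
    (hS : ∀ x ∈ S, prefixCylinder (τ x) x ⊆ S)
    (hc : ∀ x ∈ S, μ₁ (prefixCylinder (τ x) x) = c * μ₀ (prefixCylinder (τ x) x)) :
    μ₁ S = c * μ₀ S := by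
  classical
  set F := S.toFinite.toFinset.image fun x => prefixAtomCylinder (τ x) x
  have hF_eq : ⋃ A ∈ F, A = ⋃ x ∈ S, prefixAtomCylinder (τ x) x := by simp [F]
  have hF : ∀ μ : Measure (Fin T → X), μ S = μ (⋃ A ∈ F, A) := by
    intro μ
    rw [hF_eq]
    refine le_antisymm (measure_mono fun x hx => mem_biUnion hx
      (prefixCylinder_subset_prefixAtomCylinder _ x (mem_prefixCylinder_self _ x)))
      (measure_le_of_subset_biUnion_measurableAtom μ (iUnion₂_subset fun x hx => ?_))
    exact (prefixAtomCylinder_subset_biUnion_measurableAtom _ x).trans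
      (biUnion_subset_biUnion_left (hS x hx))
  have hmeas : ∀ A ∈ F, MeasurableSet A := by
    simp only [F, Finset.forall_mem_image]
    exact fun x _ => measurableSet_prefixAtomCylinder _ x
  have hlam : ∀ A ∈ F, ∀ B ∈ F, ¬Disjoint A B → A ⊆ B ∨ B ⊆ A := by
    simp only [F, Finset.forall_mem_image]
    intro x _ y _ h
    rcases le_total (τ x) (τ y) with hxy | hyx
    · exact Or.inr (prefixAtomCylinder_subset_of_le_of_not_disjoint hxy h)
    · exact Or.inl (prefixAtomCylinder_subset_of_le_of_not_disjoint hyx fun hd => h hd.symm)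
  rw [hF μ₁, hF μ₀, measure_biUnion_eq_sum_maximal μ₁ F hmeas hlam,
    measure_biUnion_eq_sum_maximal μ₀ F hmeas hlam, Finset.mul_sum]
  refine Finset.sum_congr rfl fun A hA => ?_
  obtain ⟨x, hx, rfl⟩ := Finset.mem_image.1 (Finset.mem_filter.1 hA).1
  rw [measure_prefixAtomCylinder, measure_prefixAtomCylinder, hc x (S.toFinite.mem_toFinset.1 hx)]

end PrefixCylinder

theorem calibration_simple_general
    {X : Type*} [Fintype X] [MeasurableSpace X] {T : ℕ}
    (P0 P1 : Measure (Fin T → X)) [IsProbabilityMeasure P0]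
    (hfull : ∀ (n : ℕ) (x : Fin T → X), n ≤ T →
      0 < P0 {ω | ∀ i : Fin T, (i : ℕ) < n → ω i = x i} ∧
      0 < P1 {ω | ∀ i : Fin T, (i : ℕ) < n → ω i = x i})
    (τ : (Fin T → X) → ℕ)
    (hτle : ∀ ω, τ ω ≤ T)
    (hstop : ∀ ω ω', (∀ i : Fin T, (i : ℕ) < τ ω → ω' i = ω i) → τ ω' = τ ω)
    (β : (Fin T → X) → ℝ≥0∞)
    (hβ : ∀ ω, β ω =
      P1 {ω' | ∀ i : Fin T, (i : ℕ) < τ ω → ω' i = ω i} /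
        P0 {ω' | ∀ i : Fin T, (i : ℕ) < τ ω → ω' i = ω i})
    (c : ℝ≥0∞) (hex : ∃ ω, β ω = c) :
    P1 {ω | β ω = c} / P0 {ω | β ω = c} = c := by
  set S := {ω | β ω = c}
  have hβ_cyl : ∀ ω, β ω = P1 (prefixCylinder (τ ω) ω) / P0 (prefixCylinder (τ ω) ω) := hβ
  have hP0_cyl : ∀ ω, P0 (prefixCylinder (τ ω) ω) ≠ 0 :=
    fun ω => (hfull (τ ω) ω (hτle ω)).1.ne'
  have hS : ∀ ω ∈ S, prefixCylinder (τ ω) ω ⊆ S := fun ω hω ω' hω' => by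
    rw [mem_ofPred_eq, hβ_cyl, prefixCylinder_eq_of_mem hstop hω', ← hβ_cyl]
    exact hω
  have hratio : ∀ ω ∈ S, P1 (prefixCylinder (τ ω) ω) = c * P0 (prefixCylinder (τ ω) ω) :=
    fun ω hω => by rw [← hω, hβ_cyl, ENNReal.div_mul_cancel (hP0_cyl ω) (measure_ne_top _ _)]
  obtain ⟨ω₀, hω₀⟩ := hex
  have hP0_S : P0 S ≠ 0 := fun h => hP0_cyl ω₀ (measure_mono_null (hS ω₀ hω₀) h)
  rw [measure_eq_mul_of_prefixCylinder_subset P0 P1 τ hS hratio,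
    ENNReal.mul_div_cancel_right hP0_S (measure_ne_top P0 S)]

/-- Calibration of the Bayes factor under optional stopping, finite sample space:
for every `c > 0` attained by the stopped Bayes factor `β(X^τ)`, we have
`P(β(X^τ) = c | H1) / P(β(X^τ) = c | H0) = c`. -/
theorem calibration_simple
    {X : Type*} [Fintype X] [MeasurableSpace X] {T : ℕ}
    (P0 P1 : Measure (Fin T → X)) [IsProbabilityMeasure P0] [IsProbabilityMeasure P1]
    (hfull : ∀ (n : ℕ) (x : Fin T → X), n ≤ T →
      0 < P0 {ω | ∀ i : Fin T, (i : ℕ) < n → ω i = x i} ∧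
      0 < P1 {ω | ∀ i : Fin T, (i : ℕ) < n → ω i = x i})
    (τ : (Fin T → X) → ℕ)
    (hτle : ∀ ω, τ ω ≤ T)
    (hstop : ∀ ω ω', (∀ i : Fin T, (i : ℕ) < τ ω → ω' i = ω i) → τ ω' = τ ω)
    (β : (Fin T → X) → ℝ≥0∞)
    (hβ : ∀ ω, β ω =
      P1 {ω' | ∀ i : Fin T, (i : ℕ) < τ ω → ω' i = ω i} /
        P0 {ω' | ∀ i : Fin T, (i : ℕ) < τ ω → ω' i = ω i})
    (c : ℝ≥0∞) (hc : 0 < c) (hex : ∃ ω, β ω = c) :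
    P1 {ω | β ω = c} / P0 {ω | β ω = c} = c :=
  calibration_simple_general P0 P1 hfull τ hτle hstop β hβ c hex
end

section
/- Transfer of calibration from fixed sample sizes to stopping times: let P0, P1 be probability measures on (Ω, F), τ an a.s.-finite stopping time, and (B_n) an adapted sequence of positive random variables with stopped variable B_τ = Σ_n 1[τ=n] B_n. If for some constant c > 0 and every n with P0(τ=n) > 0 one has, for μ^{P0,B_n}-almost all b, (P1(τ=n)/P0(τ=n)) · (dμ^{P1,B_n|τ=n}/dμ^{P0,B_n|τ=n})(b) = c·b, then for μ^{P0,B_τ}-almost all b, (dμ^{P1,B_τ}/dμ^{P0,B_τ})(b) = c·b. -/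
open MeasureTheory ProbabilityTheory
open scoped ENNReal

/-!
The law of `B_τ` splits along the events `{τ = n}`:
`μ^{P,B_τ} = Σₙ μ^{P|_{τ=n}, B_n} = Σₙ P(τ=n) · μ^{P,B_n|τ=n}`.
The fixed-sample-size hypothesis says precisely that the `n`-th summand for `P1` is the `n`-th
summand for `P0` with density `b ↦ c b`; summing over `n`, `μ^{P1,B_τ}` has density `b ↦ c b`
with respect to `μ^{P0,B_τ}`.
-/

namespace ProbabilityTheory

variable {Ω α : Type*} [MeasurableSpace Ω] [MeasurableSpace α]

lemma measure_smul_cond (μ : Measure Ω) [IsFiniteMeasure μ] (s : Set Ω) :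
    μ s • μ[|s] = μ.restrict s := by
  by_cases hs : μ s = 0
  · simp [hs, Measure.restrict_eq_zero.mpr hs]
  · rw [cond, smul_smul, ENNReal.mul_inv_cancel hs (measure_ne_top μ s), one_smul]

lemma map_restrict_eq_withDensity_of_rnDeriv_cond {μ ν : Measure Ω} [IsFiniteMeasure μ]
    [IsFiniteMeasure ν] {A : Set Ω} {X : Ω → α} (hX : Measurable X) {g : α → ℝ≥0∞}
    (hac : (ν[|A]).map X ≪ (μ[|A]).map X)
    (hg : μ A ≠ 0 → ∀ᵐ b ∂μ.map X,
      ν A / μ A * ((ν[|A]).map X).rnDeriv ((μ[|A]).map X) b = g b) :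
    (ν.restrict A).map X = ((μ.restrict A).map X).withDensity g := by
  by_cases hμA : μ A = 0
  · have hρ₀ : (μ[|A]).map X = 0 := by
      rw [cond_eq_zero_of_meas_eq_zero hμA, Measure.map_zero]
    have hρ₁ : (ν[|A]).map X = 0 := Measure.absolutelyContinuous_zero_iff.mp (hρ₀ ▸ hac)
    rw [← measure_smul_cond, Measure.map_smul, hρ₁, Measure.restrict_eq_zero.mpr hμA]
    simp
  set ρ₀ := (μ[|A]).map X
  set r := ((ν[|A]).map X).rnDeriv ρ₀
  have hr : Measurable r := Measure.measurable_rnDeriv _ _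
  have hνA : ν A • r = μ A • fun b => ν A / μ A * r b := by
    funext b
    simp only [Pi.smul_apply, smul_eq_mul, ← mul_assoc,
      ENNReal.mul_div_cancel hμA (measure_ne_top μ A)]
  have hmap_restrict : (μ.restrict A).map X ≤ μ.map X :=
    Measure.map_mono Measure.restrict_le_self hX
  calc (ν.restrict A).map X = ν A • (ν[|A]).map X := by
        rw [← measure_smul_cond, Measure.map_smul]
    _ = ρ₀.withDensity (ν A • r) := by
        rw [withDensity_smul _ hr, Measure.withDensity_rnDeriv_eq _ _ hac]
    _ = (μ A • ρ₀).withDensity (fun b => ν A / μ A * r b) := by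
        rw [hνA, withDensity_smul _ (f := fun b => ν A / μ A * r b) (measurable_const.mul hr),
          withDensity_smul_measure]
    _ = ((μ.restrict A).map X).withDensity g := by
        rw [← Measure.map_smul, measure_smul_cond]
        exact withDensity_congr_ae ((hg hμA).filter_mono (ae_mono hmap_restrict))

end ProbabilityTheory

section Stopped

variable {Ω ι α : Type*} [MeasurableSpace Ω] [MeasurableSpace ι] [MeasurableSpace α]
  [Countable ι] [MeasurableSingletonClass ι]

lemma measurable_stopped {τ : Ω → ι} (hτ : Measurable τ) {B : ι → Ω → α}
    (hB : ∀ i, Measurable (B i)) : Measurable fun ω => B (τ ω) ω :=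
  (measurable_from_prod_countable_left (f := fun p : Ω × ι => B p.2 p.1) hB).comp
    (measurable_id.prodMk hτ)

namespace MeasureTheory.Measure

lemma map_stopped_eq_sum_map_restrict (P : Measure Ω) {τ : Ω → ι} (hτ : Measurable τ)
    {B : ι → Ω → α} (hB : ∀ i, Measurable (B i)) :
    P.map (fun ω => B (τ ω) ω) = sum fun i => (P.restrict {ω | τ ω = i}).map (B i) := by
  have hfibres : P = sum fun i => P.restrict {ω | τ ω = i} := by
    rw [← restrict_iUnion (s := fun i => {ω | τ ω = i})
      (fun i j hij => Set.disjoint_left.mpr fun ω hi hj => hij (hi.symm.trans hj))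
      fun i => hτ (measurableSet_singleton i)]
    simp [Set.iUnion_ofPred]
  conv_lhs => rw [hfibres]
  rw [map_sum (measurable_stopped hτ hB).aemeasurable]
  congr with i : 1
  refine map_congr ?_
  filter_upwards [ae_restrict_mem (hτ (measurableSet_singleton i))] with ω hω
  rw [show τ ω = i from hω]

end MeasureTheory.Measure

end Stopped

theorem calibration_transfer_to_stopping_time_general
    {Ω : Type*} [MeasurableSpace Ω]
    (P0 P1 : Measure Ω) [IsProbabilityMeasure P0] [IsProbabilityMeasure P1]
    (τ : Ω → ℕ) (hτ : Measurable τ)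
    (B : ℕ → Ω → ℝ≥0∞) (hBmeas : ∀ n, Measurable (B n))
    (c : ℝ≥0∞)
    (hac : ∀ n, Measure.map (B n) (P1[|{ω | τ ω = n}]) ≪
      Measure.map (B n) (P0[|{ω | τ ω = n}]))
    (hfix : ∀ n, P0 {ω | τ ω = n} ≠ 0 →
      ∀ᵐ b ∂(Measure.map (B n) P0),
        (P1 {ω | τ ω = n} / P0 {ω | τ ω = n}) *
          (Measure.map (B n) (P1[|{ω | τ ω = n}])).rnDeriv
            (Measure.map (B n) (P0[|{ω | τ ω = n}])) b = c * b) :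
    ∀ᵐ b ∂(Measure.map (fun ω => B (τ ω) ω) P0),
      (Measure.map (fun ω => B (τ ω) ω) P1).rnDeriv
        (Measure.map (fun ω => B (τ ω) ω) P0) b = c * b := by
  have hlaw : P1.map (fun ω => B (τ ω) ω) =
      (P0.map fun ω => B (τ ω) ω).withDensity fun b => c * b := by
    rw [Measure.map_stopped_eq_sum_map_restrict P1 hτ hBmeas,
      Measure.map_stopped_eq_sum_map_restrict P0 hτ hBmeas, withDensity_sum]
    congr with n : 1
    exact map_restrict_eq_withDensity_of_rnDeriv_cond (hBmeas n) (hac n) (hfix n)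
  rw [hlaw]
  exact Measure.rnDeriv_withDensity _ (measurable_const.mul measurable_id)

/-- Transfer of calibration from fixed sample sizes to stopping times (Lemma 1):
if for every `n` with `P0(τ = n) > 0` the fixed-sample-size calibration property
`(P1(τ=n)/P0(τ=n)) · (dμ^{P1,B_n|τ=n}/dμ^{P0,B_n|τ=n})(b) = c·b` holds
`μ^{P0,B_n}`-a.e., then `(dμ^{P1,B_τ}/dμ^{P0,B_τ})(b) = c·b` holds `μ^{P0,B_τ}`-a.e. -/
theorem calibration_transfer_to_stopping_time
    {Ω : Type*} [MeasurableSpace Ω]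
    (P0 P1 : Measure Ω) [IsProbabilityMeasure P0] [IsProbabilityMeasure P1]
    (τ : Ω → ℕ) (hτ : Measurable τ)
    (B : ℕ → Ω → ℝ≥0∞) (hBmeas : ∀ n, Measurable (B n)) (hBpos : ∀ n ω, 0 < B n ω)
    (c : ℝ≥0∞) (hc : 0 < c)
    (hac : ∀ n, Measure.map (B n) (P1[|{ω | τ ω = n}]) ≪
      Measure.map (B n) (P0[|{ω | τ ω = n}]))
    (hac' : ∀ n, Measure.map (B n) (P0[|{ω | τ ω = n}]) ≪
      Measure.map (B n) (P1[|{ω | τ ω = n}]))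
    (hacτ : Measure.map (fun ω => B (τ ω) ω) P1 ≪ Measure.map (fun ω => B (τ ω) ω) P0)
    (hfix : ∀ n, P0 {ω | τ ω = n} ≠ 0 →
      ∀ᵐ b ∂(Measure.map (B n) P0),
        (P1 {ω | τ ω = n} / P0 {ω | τ ω = n}) *
          (Measure.map (B n) (P1[|{ω | τ ω = n}])).rnDeriv
            (Measure.map (B n) (P0[|{ω | τ ω = n}])) b = c * b) :
    ∀ᵐ b ∂(Measure.map (fun ω => B (τ ω) ω) P0),
      (Measure.map (fun ω => B (τ ω) ω) P1).rnDeriv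
        (Measure.map (fun ω => B (τ ω) ω) P0) b = c * b :=
  calibration_transfer_to_stopping_time_general P0 P1 τ hτ B hBmeas c hac hfix
end

section
/- Fixed-n calibration of posterior odds: for all n, the conditional pushforward measures of the posterior odds γ_n under the two Bayes marginals satisfy, for μ^{P̄0,γ_n | τ=n}-almost all b: (P̄1(τ=n)/P̄0(τ=n)) · (dμ^{P̄1,γ_n|τ=n}/dμ^{P̄0,γ_n|τ=n})(b) = (π(H0)/π(H1)) · b. -/
open MeasureTheory ProbabilityTheory
open scoped ENNReal

/-!
The posterior odds `γ_n` are a constant multiple of the likelihood ratio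
`L = dP̄1^{(n)}/dP̄0^{(n)}`, and `{τ = n} ∈ ℱ n`. Whenever `L = h ∘ φ` for an `ℱ n`-measurable
statistic `φ` and `A ∈ ℱ n`, we get `P̄1(φ ∈ B, A) = ∫_{φ ∈ B, A} h ∘ φ dP̄0 = ∫_B h d(φ_* P̄0|_A)`:
the likelihood ratio of a statistic that carries `L` is `L` itself, read through `h`.
Passing to the conditional laws given `A` only rescales by `P̄0(A)/P̄1(A)`.
-/

namespace MeasureTheory

variable {Ω β : Type*} {m m0 : MeasurableSpace Ω} [MeasurableSpace β]
  {P0 P1 : Measure[m0] Ω} [IsFiniteMeasure P0] [IsFiniteMeasure P1]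

lemma setLIntegral_rnDeriv_trim (hm : m ≤ m0) (hac : P1 ≪ P0) {S : Set Ω}
    (hS : MeasurableSet[m] S) :
    ∫⁻ x in S, (P1.trim hm).rnDeriv (P0.trim hm) x ∂P0 = P1 S := by
  rw [← lintegral_trim hm (Measure.measurable_rnDeriv _ _), ← restrict_trim hm _ hS,
    Measure.setLIntegral_rnDeriv (hac.trim hm), trim_measurableSet_eq hm hS]

lemma map_restrict_eq_withDensity_of_rnDeriv_trim_eq_comp (hm : m ≤ m0) (hac : P1 ≪ P0)
    {φ : Ω → β} (hφ : Measurable[m] φ) {h : β → ℝ≥0∞} (hh : Measurable h)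
    (hL : (P1.trim hm).rnDeriv (P0.trim hm) = h ∘ φ) {A : Set Ω} (hA : MeasurableSet[m] A) :
    (P1.restrict A).map φ = ((P0.restrict A).map φ).withDensity h := by
  have hφ0 : Measurable φ := hφ.mono hm le_rfl
  ext B hB
  have hS : MeasurableSet[m] (φ ⁻¹' B ∩ A) := (hφ hB).inter hA
  calc (P1.restrict A).map φ B = P1 (φ ⁻¹' B ∩ A) := by
        rw [Measure.map_apply hφ0 hB, Measure.restrict_apply (hφ0 hB)]
    _ = ∫⁻ x in φ ⁻¹' B ∩ A, h (φ x) ∂P0 := by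
        rw [← setLIntegral_rnDeriv_trim hm hac hS, hL, Function.comp_def]
    _ = ((P0.restrict A).map φ).withDensity h B := by
        rw [withDensity_apply _ hB, setLIntegral_map hB hh hφ0,
          Measure.restrict_restrict (hφ0 hB)]

lemma rnDeriv_map_cond_of_rnDeriv_trim_eq_comp (hm : m ≤ m0) (hac : P1 ≪ P0)
    {φ : Ω → β} (hφ : Measurable[m] φ) {h : β → ℝ≥0∞} (hh : Measurable h)
    (hL : (P1.trim hm).rnDeriv (P0.trim hm) = h ∘ φ) {A : Set Ω} (hA : MeasurableSet[m] A)
    (hA0 : P0 A ≠ 0) (hA1 : P1 A ≠ 0) :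
    ∀ᵐ b ∂(P0[|A]).map φ, P1 A / P0 A * ((P1[|A]).map φ).rnDeriv ((P0[|A]).map φ) b = h b := by
  have hc0 : P1 A / P0 A ≠ 0 := ENNReal.div_ne_zero.2 ⟨hA1, measure_ne_top _ _⟩
  have hctop : P1 A / P0 A ≠ ∞ := ENNReal.div_ne_top (measure_ne_top _ _) hA0
  have hmap : (P1[|A]).map φ = (P1 A / P0 A)⁻¹ • ((P0[|A]).map φ).withDensity h := by
    rw [ProbabilityTheory.cond, ProbabilityTheory.cond, Measure.map_smul, Measure.map_smul,
      map_restrict_eq_withDensity_of_rnDeriv_trim_eq_comp hm hac hφ hh hL hA,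
      withDensity_smul_measure, smul_smul, ENNReal.inv_div (Or.inl (measure_ne_top _ _))
        (Or.inl hA0), div_eq_mul_inv, mul_right_comm, ENNReal.mul_inv_cancel hA0
        (measure_ne_top _ _), one_mul]
  rw [hmap, ← withDensity_smul _ hh]
  filter_upwards [Measure.rnDeriv_withDensity _ (hh.const_smul (P1 A / P0 A)⁻¹)] with b hb
  rw [hb, Pi.smul_apply, smul_eq_mul, ENNReal.mul_inv_cancel_left hc0 hctop]

end MeasureTheory

/-- Fixed-`n` calibration of the posterior odds (Lemma 2, general case): with
`γ_n = (dP̄1^{(n)}/dP̄0^{(n)})·π(H1)/π(H0)` the posterior odds process, for every `n`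
with `P̄0(τ = n) > 0`, `μ^{P̄0,γ_n|τ=n}`-a.e. `b` satisfies
`(P̄1(τ=n)/P̄0(τ=n)) · (dμ^{P̄1,γ_n|τ=n}/dμ^{P̄0,γ_n|τ=n})(b) = (π(H0)/π(H1))·b`. -/
theorem fixed_n_calibration_general
    {Ω : Type*} [m0 : MeasurableSpace Ω] (ℱ : Filtration ℕ m0)
    (P0 P1 : Measure Ω) [IsProbabilityMeasure P0] [IsProbabilityMeasure P1]
    (hac01 : P1 ≪ P0) (hac10 : P0 ≪ P1)
    (π0 π1 : ℝ≥0∞) (hπ0 : 0 < π0) (hπ0' : π0 < ⊤) (hπ1 : 0 < π1) (hπ1' : π1 < ⊤)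
    (τ : Ω → ℕ) (hτ : ∀ n, MeasurableSet[ℱ n] {ω | τ ω = n})
    (γ : ℕ → Ω → ℝ≥0∞)
    (hγ : ∀ n ω, γ n ω =
      (π1 / π0) * (P1.trim (ℱ.le n)).rnDeriv (P0.trim (ℱ.le n)) ω) :
    ∀ n, P0 {ω | τ ω = n} ≠ 0 →
      ∀ᵐ b ∂(Measure.map (γ n) (P0[|{ω | τ ω = n}])),
        (P1 {ω | τ ω = n} / P0 {ω | τ ω = n}) *
          (Measure.map (γ n) (P1[|{ω | τ ω = n}])).rnDeriv
            (Measure.map (γ n) (P0[|{ω | τ ω = n}])) b = (π0 / π1) * b := by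
  intro n hA0
  have hγ_meas : Measurable[ℱ n] (γ n) := by
    rw [funext (hγ n)]
    exact measurable_const.mul (Measure.measurable_rnDeriv _ _)
  have hL : (P1.trim (ℱ.le n)).rnDeriv (P0.trim (ℱ.le n)) = (fun b => π0 / π1 * b) ∘ γ n := by
    funext ω
    rw [Function.comp_apply, hγ, ← ENNReal.inv_div (Or.inl hπ0'.ne) (Or.inl hπ0.ne'),
      ENNReal.inv_mul_cancel_left (ENNReal.div_pos hπ1.ne' hπ0'.ne).ne'
        (ENNReal.div_ne_top hπ1'.ne hπ0.ne')]
  exact rnDeriv_map_cond_of_rnDeriv_trim_eq_comp (ℱ.le n) hac01 hγ_meas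
    (measurable_const_mul _) hL (hτ n) hA0 (fun h => hA0 (hac10 h))
end

section
/- Calibration under optional stopping (general case): for an a.s.-finite stopping time τ, the pushforward measures of the stopped posterior odds γ_τ under the conditional Bayes marginals satisfy, for μ^{P̄0,γ_τ}-almost all b, (π(H1)/π(H0)) · (dμ^{P̄1,γ_τ}/dμ^{P̄0,γ_τ})(b) = b. -/
open MeasureTheory ProbabilityTheory
open scoped ENNReal

/-!
On `{τ = n}` the stopped odds are `(π1/π0)` times the density of `P̄1` w.r.t. `P̄0` on `ℱ n`, so
summing over `n` shows that `(π0/π1) · γ_τ` is a density of `P̄1` w.r.t. `P̄0` on `σ(γ_τ)`.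
A density of the form `φ ∘ γ_τ` passes to the pushforwards, giving
`dμ^{P̄1,γ_τ}/dμ^{P̄0,γ_τ} = φ` with `φ b = (π0/π1) · b`.
-/

section

variable {Ω β : Type*} [MeasurableSpace β]

lemma measurable_stopped_s7 [MeasurableSpace Ω] {X : ℕ → Ω → β} {τ : Ω → ℕ}
    (hX : ∀ n, Measurable (X n)) (hτ : Measurable τ) : Measurable fun ω => X (τ ω) ω :=
  (measurable_from_prod_countable_left (f := fun p : Ω × ℕ => X p.2 p.1) hX).comp
    (measurable_id.prodMk hτ)

lemma measurableSet_preimage_stopped_inter {m : ℕ → MeasurableSpace Ω} {X : ℕ → Ω → β}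
    {τ : Ω → ℕ} (hX : ∀ n, Measurable[m n] (X n)) (hτ : ∀ n, MeasurableSet[m n] {ω | τ ω = n})
    {s : Set β} (hs : MeasurableSet s) (n : ℕ) :
    MeasurableSet[m n] ((fun ω => X (τ ω) ω) ⁻¹' s ∩ {ω | τ ω = n}) := by
  have : (fun ω => X (τ ω) ω) ⁻¹' s ∩ {ω | τ ω = n} = X n ⁻¹' s ∩ {ω | τ ω = n} := by
    ext ω
    simp only [Set.mem_inter_iff, Set.mem_preimage, Set.mem_ofPred_eq]
    exact and_congr_left fun h => by rw [h]
  rw [this]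
  exact (hX n hs).inter (hτ n)

/-- `hA` says `A ∈ ℱ_τ`: on the stopped σ-algebra, `ν` has the stopped density process as its
density w.r.t. `μ`. -/
theorem measure_eq_setLIntegral_stopped_rnDeriv_trim [m0 : MeasurableSpace Ω]
    (ℱ : Filtration ℕ m0) {μ ν : Measure Ω}
    [IsFiniteMeasure μ] [IsFiniteMeasure ν] (hνμ : ν ≪ μ) {τ : Ω → ℕ} {A : Set Ω}
    (hA : ∀ n, MeasurableSet[ℱ n] (A ∩ {ω | τ ω = n})) :
    ν A = ∫⁻ ω in A, (ν.trim (ℱ.le (τ ω))).rnDeriv (μ.trim (ℱ.le (τ ω))) ω ∂μ := by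
  set f : Ω → ℝ≥0∞ := fun ω => (ν.trim (ℱ.le (τ ω))).rnDeriv (μ.trim (ℱ.le (τ ω))) ω
  set B : ℕ → Set Ω := fun n => A ∩ {ω | τ ω = n}
  have hB : ∀ n, MeasurableSet (B n) := fun n => ℱ.le n _ (hA n)
  have hB_union : ⋃ n, B n = A := by
    ext ω
    simp only [B, Set.mem_iUnion, Set.mem_inter_iff, Set.mem_ofPred_eq, exists_and_left,
      exists_eq', and_true]
  have hB_disj : Pairwise (Function.onFun Disjoint B) := fun i j hij =>
    Set.disjoint_left.mpr fun ω hi hj => hij (hi.2.symm.trans hj.2)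
  have h_piece : ∀ n, ν (B n) = ∫⁻ ω in B n, f ω ∂μ := fun n => calc
    ν (B n) = ν.trim (ℱ.le n) (B n) := (trim_measurableSet_eq _ (hA n)).symm
    _ = ∫⁻ ω in B n, (ν.trim (ℱ.le n)).rnDeriv (μ.trim (ℱ.le n)) ω ∂μ.trim (ℱ.le n) :=
      (Measure.setLIntegral_rnDeriv' (hνμ.trim _) (hA n)).symm
    _ = ∫⁻ ω in B n, (ν.trim (ℱ.le n)).rnDeriv (μ.trim (ℱ.le n)) ω ∂μ := by
      rw [restrict_trim _ _ (hA n), lintegral_trim _ (Measure.measurable_rnDeriv _ _)]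
    _ = ∫⁻ ω in B n, f ω ∂μ :=
      setLIntegral_congr_fun (hB n) fun ω hω => by simp only [f]; rw [hω.2]
  calc ν A = ∑' n, ν (B n) := by rw [← measure_iUnion hB_disj hB, hB_union]
    _ = ∑' n, ∫⁻ ω in B n, f ω ∂μ := by simp_rw [h_piece]
    _ = ∫⁻ ω in A, f ω ∂μ := by rw [← lintegral_iUnion hB hB_disj, hB_union]

section Pushforward

variable [MeasurableSpace Ω] {μ ν : Measure Ω} {X : Ω → β} {φ : β → ℝ≥0∞}

lemma map_eq_withDensity_of_setLIntegral_comp (hX : Measurable X) (hφ : Measurable φ)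
    (h : ∀ s, MeasurableSet s → ν (X ⁻¹' s) = ∫⁻ ω in X ⁻¹' s, φ (X ω) ∂μ) :
    ν.map X = (μ.map X).withDensity φ := by
  ext s hs
  rw [Measure.map_apply hX hs, withDensity_apply _ hs, setLIntegral_map hs hφ hX]
  exact h s hs

lemma rnDeriv_map_ae_eq_of_setLIntegral_comp [SigmaFinite (μ.map X)] (hX : Measurable X)
    (hφ : Measurable φ)
    (h : ∀ s, MeasurableSet s → ν (X ⁻¹' s) = ∫⁻ ω in X ⁻¹' s, φ (X ω) ∂μ) :
    (ν.map X).rnDeriv (μ.map X) =ᵐ[μ.map X] φ := by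
  rw [map_eq_withDensity_of_setLIntegral_comp hX hφ h]
  exact Measure.rnDeriv_withDensity _ hφ

end Pushforward

end

theorem calibration_under_optional_stopping_general_general
    {Ω : Type*} [m0 : MeasurableSpace Ω] (ℱ : Filtration ℕ m0)
    (P0 P1 : Measure Ω) [IsProbabilityMeasure P0] [IsProbabilityMeasure P1]
    (hac01 : P1 ≪ P0)
    (π0 π1 : ℝ≥0∞) (hπ0 : 0 < π0) (hπ0' : π0 < ⊤) (hπ1 : 0 < π1) (hπ1' : π1 < ⊤)
    (τ : Ω → ℕ) (hτ : ∀ n, MeasurableSet[ℱ n] {ω | τ ω = n})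
    (γ : ℕ → Ω → ℝ≥0∞)
    (hγ : ∀ n ω, γ n ω =
      (π1 / π0) * (P1.trim (ℱ.le n)).rnDeriv (P0.trim (ℱ.le n)) ω) :
    ∀ᵐ b ∂(Measure.map (fun ω => γ (τ ω) ω) P0),
      (π1 / π0) * (Measure.map (fun ω => γ (τ ω) ω) P1).rnDeriv
        (Measure.map (fun ω => γ (τ ω) ω) P0) b = b := by
  set c := π1 / π0
  have hc0 : c ≠ 0 := ENNReal.div_ne_zero.mpr ⟨hπ1.ne', hπ0'.ne⟩
  have hct : c ≠ ⊤ := ENNReal.div_ne_top hπ1'.ne hπ0.ne'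
  have hγ_meas : ∀ n, Measurable[ℱ n] (γ n) := fun n => by
    simp only [funext (hγ n)]
    exact (Measure.measurable_rnDeriv _ _).const_mul c
  have hγτ_meas : Measurable fun ω => γ (τ ω) ω :=
    measurable_stopped_s7 (fun n => (hγ_meas n).mono (ℱ.le n) le_rfl)
      (measurable_to_countable' fun n => ℱ.le n _ (hτ n))
  have h_density : ∀ s, MeasurableSet s → P1 ((fun ω => γ (τ ω) ω) ⁻¹' s) =
      ∫⁻ ω in (fun ω => γ (τ ω) ω) ⁻¹' s, c⁻¹ * γ (τ ω) ω ∂P0 := fun s hs => by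
    have h_cancel : ∀ ω, c⁻¹ * γ (τ ω) ω =
        (P1.trim (ℱ.le (τ ω))).rnDeriv (P0.trim (ℱ.le (τ ω))) ω := fun ω => by
      rw [hγ, ← mul_assoc, ENNReal.inv_mul_cancel hc0 hct, one_mul]
    simp_rw [h_cancel]
    exact measure_eq_setLIntegral_stopped_rnDeriv_trim ℱ hac01
      (measurableSet_preimage_stopped_inter hγ_meas hτ hs)
  filter_upwards [rnDeriv_map_ae_eq_of_setLIntegral_comp hγτ_meas
    (measurable_const.mul measurable_id) h_density] with b hb
  rw [hb, Pi.mul_apply, id, ← mul_assoc, ENNReal.mul_inv_cancel hc0 hct, one_mul]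

/-- Calibration under optional stopping (general case, Corollary 1): for an a.s.-finite
stopping time `τ` adapted to the filtration, the pushforwards of the stopped posterior
odds `γ_τ` under the Bayes marginals satisfy, `μ^{P̄0,γ_τ}`-a.e.,
`(π(H1)/π(H0)) · (dμ^{P̄1,γ_τ}/dμ^{P̄0,γ_τ})(b) = b`. -/
theorem calibration_under_optional_stopping_general
    {Ω : Type*} [m0 : MeasurableSpace Ω] (ℱ : Filtration ℕ m0)
    (P0 P1 : Measure Ω) [IsProbabilityMeasure P0] [IsProbabilityMeasure P1]
    (hac01 : P1 ≪ P0) (hac10 : P0 ≪ P1)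
    (π0 π1 : ℝ≥0∞) (hπ0 : 0 < π0) (hπ0' : π0 < ⊤) (hπ1 : 0 < π1) (hπ1' : π1 < ⊤)
    (τ : Ω → ℕ) (hτ : ∀ n, MeasurableSet[ℱ n] {ω | τ ω = n})
    (γ : ℕ → Ω → ℝ≥0∞)
    (hγ : ∀ n ω, γ n ω =
      (π1 / π0) * (P1.trim (ℱ.le n)).rnDeriv (P0.trim (ℱ.le n)) ω) :
    ∀ᵐ b ∂(Measure.map (fun ω => γ (τ ω) ω) P0),
      (π1 / π0) * (Measure.map (fun ω => γ (τ ω) ω) P1).rnDeriv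
        (Measure.map (fun ω => γ (τ ω) ω) P0) b = b :=
  calibration_under_optional_stopping_general_general (m0 := m0) ℱ P0 P1 hac01 π0 π1 hπ0 hπ0' hπ1
    hπ1' τ hτ γ hγ
end

section
/- If a positive random variable γ_τ satisfies the calibration property that dμ^{P̄1,γ_τ}/dμ^{P̄0,γ_τ}(b) = b·π(H0)/π(H1) almost everywhere, then E_{P̄0}[γ_τ] = π(H1)/π(H0); consequently the stopped Bayes factor β_τ = γ_τ·π(H0)/π(H1) satisfies E_{P̄0}[β_τ] = 1. -/
open MeasureTheory
open scoped ENNReal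

/-!
Push `P̄0` and `P̄1` forward along `γ`. Calibration says that the density of the second
pushforward with respect to the first is `b ↦ b * c` with `c = π(H0)/π(H1)`, so
`c * E_{P̄0}[γ] = ∫ b * c dμ^{P̄0,γ} = μ^{P̄1,γ}(univ) = 1`.
-/

lemma lintegral_id_eq_of_rnDeriv_eq_mul_const {μ ν : Measure ℝ≥0∞}
    [ν.HaveLebesgueDecomposition μ] (hνμ : ν ≪ μ) {c : ℝ≥0∞} (hc₀ : c ≠ 0) (hc : c ≠ ∞)
    (hrn : ∀ᵐ b ∂μ, ν.rnDeriv μ b = b * c) :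
    ∫⁻ b, b ∂μ = ν Set.univ / c := by
  rw [ENNReal.eq_div_iff hc₀ hc, mul_comm,
    ← lintegral_mul_const (f := fun b => b) _ measurable_id, ← Measure.lintegral_rnDeriv hνμ]
  exact lintegral_congr_ae (hrn.mono fun b hb => hb.symm)

lemma lintegral_eq_inv_of_map_rnDeriv_eq_mul_const {Ω : Type*} [MeasurableSpace Ω]
    {P₀ P₁ : Measure Ω} [IsFiniteMeasure P₀] [IsProbabilityMeasure P₁]
    {X : Ω → ℝ≥0∞} (hX : Measurable X) (hac : P₁.map X ≪ P₀.map X)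
    {c : ℝ≥0∞} (hc₀ : c ≠ 0) (hc : c ≠ ∞)
    (hrn : ∀ᵐ b ∂P₀.map X, (P₁.map X).rnDeriv (P₀.map X) b = b * c) :
    ∫⁻ ω, X ω ∂P₀ = c⁻¹ := by
  have : IsProbabilityMeasure (P₁.map X) := Measure.isProbabilityMeasure_map hX.aemeasurable
  rw [← lintegral_map (f := fun b => b) measurable_id hX,
    lintegral_id_eq_of_rnDeriv_eq_mul_const hac hc₀ hc hrn, measure_univ, one_div]

theorem calibrated_stopped_odds_expectation_general
    {Ω : Type*} [MeasurableSpace Ω]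
    (P0 P1 : Measure Ω) [IsProbabilityMeasure P0] [IsProbabilityMeasure P1]
    (π0 π1 : ℝ≥0∞) (hπ0 : 0 < π0) (hπ0' : π0 < ⊤) (hπ1 : 0 < π1) (hπ1' : π1 < ⊤)
    (γ : Ω → ℝ≥0∞) (hγ : Measurable γ)
    (hac : Measure.map γ P1 ≪ Measure.map γ P0)
    (hcal : ∀ᵐ b ∂(Measure.map γ P0),
      (Measure.map γ P1).rnDeriv (Measure.map γ P0) b = b * (π0 / π1)) :
    ∫⁻ ω, γ ω ∂P0 = π1 / π0 ∧ ∫⁻ ω, γ ω * (π0 / π1) ∂P0 = 1 := by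
  have hc₀ : π0 / π1 ≠ 0 := (ENNReal.div_pos hπ0.ne' hπ1'.ne).ne'
  have hc : π0 / π1 ≠ ∞ := ENNReal.div_ne_top hπ0'.ne hπ1.ne'
  have hmean : ∫⁻ ω, γ ω ∂P0 = (π0 / π1)⁻¹ :=
    lintegral_eq_inv_of_map_rnDeriv_eq_mul_const hγ hac hc₀ hc hcal
  refine ⟨?_, ?_⟩
  · rw [hmean, ENNReal.inv_div (Or.inl hπ1'.ne) (Or.inl hπ1.ne')]
  · rw [lintegral_mul_const _ hγ, hmean, ENNReal.inv_mul_cancel hc₀ hc]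

/-- If the stopped posterior odds `γ_τ` are calibrated, i.e.
`dμ^{P̄1,γ_τ}/dμ^{P̄0,γ_τ}(b) = b·π(H0)/π(H1)` a.e., then
`E_{P̄0}[γ_τ] = π(H1)/π(H0)`, and hence the stopped Bayes factor
`β_τ = γ_τ·π(H0)/π(H1)` satisfies `E_{P̄0}[β_τ] = 1`. -/
theorem calibrated_stopped_odds_expectation
    {Ω : Type*} [MeasurableSpace Ω]
    (P0 P1 : Measure Ω) [IsProbabilityMeasure P0] [IsProbabilityMeasure P1]
    (π0 π1 : ℝ≥0∞) (hπ0 : 0 < π0) (hπ0' : π0 < ⊤) (hπ1 : 0 < π1) (hπ1' : π1 < ⊤)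
    (γ : Ω → ℝ≥0∞) (hγ : Measurable γ) (hγpos : ∀ ω, 0 < γ ω)
    (hac : Measure.map γ P1 ≪ Measure.map γ P0)
    (hac' : Measure.map γ P0 ≪ Measure.map γ P1)
    (hcal : ∀ᵐ b ∂(Measure.map γ P0),
      (Measure.map γ P1).rnDeriv (Measure.map γ P0) b = b * (π0 / π1)) :
    ∫⁻ ω, γ ω ∂P0 = π1 / π0 ∧ ∫⁻ ω, γ ω * (π0 / π1) ∂P0 = 1 :=
  calibrated_stopped_odds_expectation_general P0 P1 π0 π1 hπ0 hπ0' hπ1 hπ1' γ hγ hac hcal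
end

section
/- Semi-frequentist optional stopping (general case): under the conditional Bayes marginal P̄0(·|x^m), for any 0 < α ≤ 1 and arbitrarily large T, the probability that there exists n with m < n ≤ T such that the conditional Bayes factor β_{n|m} ≥ 1/α is at most α. -/
open MeasureTheory
open scoped ENNReal

/-- Semi-frequentist optional stopping (general case, Corollary 2): under the
(conditional) Bayes marginal `P̄0`, for `0 < α ≤ 1` and any `T`, the probability that
there is an `n` with `m < n ≤ T` such that the conditional Bayes factor
`β_{n|m} = dP̄1^{(n)}/dP̄0^{(n)}` is at least `1/α` is bounded by `α`. -/
theorem semifrequentist_general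
    {Ω : Type*} [m0 : MeasurableSpace Ω] (ℱ : Filtration ℕ m0)
    (P0 P1 : Measure Ω) [IsProbabilityMeasure P0] [IsProbabilityMeasure P1]
    (hac : ∀ n, P1.trim (ℱ.le n) ≪ P0.trim (ℱ.le n))
    (m T : ℕ)
    (β : ℕ → Ω → ℝ≥0∞)
    (hβ : ∀ n ω, β n ω = (P1.trim (ℱ.le n)).rnDeriv (P0.trim (ℱ.le n)) ω)
    (α : ℝ≥0∞) (hα : 0 < α) (hα1 : α ≤ 1) :
    P0 {ω | ∃ n, m < n ∧ n ≤ T ∧ α⁻¹ ≤ β n ω} ≤ α := by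
  classical
  set E : ℕ → Set Ω := fun n =>
    {ω | m < n ∧ n ≤ T ∧ α⁻¹ ≤ β n ω ∧ ∀ k, m < k → k < n → β k ω < α⁻¹} with hE
  have hβmeas : ∀ n, Measurable[ℱ n] (β n) := by
    intro n
    have : β n = (P1.trim (ℱ.le n)).rnDeriv (P0.trim (ℱ.le n)) := funext (hβ n)
    rw [this]
    exact Measure.measurable_rnDeriv _ _
  have hEmeas : ∀ n, MeasurableSet[ℱ n] (E n) := by
    intro n
    by_cases h1 : m < n ∧ n ≤ T
    · have hset : E n = {ω | α⁻¹ ≤ β n ω} ∩ ⋂ k ∈ Finset.Ioo m n, {ω | β k ω < α⁻¹} := by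
        ext ω
        simp only [hE, Set.mem_setOf_eq, Set.mem_inter_iff, Set.mem_iInter, Finset.mem_Ioo]
        constructor
        · rintro ⟨_, _, h3, h4⟩
          exact ⟨h3, fun k hk => h4 k hk.1 hk.2⟩
        · rintro ⟨h3, h4⟩
          exact ⟨h1.1, h1.2, h3, fun k hk1 hk2 => h4 k ⟨hk1, hk2⟩⟩
      rw [hset]
      refine MeasurableSet.inter ?_ ?_
      · exact measurableSet_le measurable_const (hβmeas n)
      · refine MeasurableSet.biInter (Finset.Ioo m n).countable_toSet ?_
        intro k hk
        have hkn : k ≤ n := le_of_lt (Finset.mem_Ioo.mp hk).2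
        have : Measurable[ℱ n] (β k) := (hβmeas k).mono (ℱ.mono hkn) le_rfl
        exact measurableSet_lt this measurable_const
    · have : E n = ∅ := by
        ext ω
        simp only [hE, Set.mem_setOf_eq, Set.mem_empty_iff_false, iff_false]
        rintro ⟨h2, h3, -⟩
        exact h1 ⟨h2, h3⟩
      rw [this]
      exact @MeasurableSet.empty Ω (ℱ n)
  have hEmeas0 : ∀ n, MeasurableSet (E n) := fun n => (ℱ.le n) _ (hEmeas n)
  -- the event equals the disjoint union of the E n
  have hUnion : {ω | ∃ n, m < n ∧ n ≤ T ∧ α⁻¹ ≤ β n ω} = ⋃ n ∈ Finset.Ioc m T, E n := by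
    ext ω
    simp only [Set.mem_setOf_eq, Set.mem_iUnion, Finset.mem_Ioc, exists_prop]
    constructor
    · rintro ⟨n, hmn, hnT, hb⟩
      have hex : ∃ k, m < k ∧ k ≤ T ∧ α⁻¹ ≤ β k ω := ⟨n, hmn, hnT, hb⟩
      obtain ⟨h1, h2, h3⟩ := Nat.find_spec hex
      refine ⟨Nat.find hex, ⟨h1, h2⟩, h1, h2, h3, ?_⟩
      intro k hk1 hk2
      by_contra h
      push_neg at h
      exact Nat.find_min hex hk2 ⟨hk1, le_trans hk2.le h2, h⟩
    · rintro ⟨n, -, h1, h2, h3, -⟩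
      exact ⟨n, h1, h2, h3⟩
  have hdisj : Set.PairwiseDisjoint ↑(Finset.Ioc m T) E := by
    intro i hi j hj hij
    wlog hlt : i < j generalizing i j
    · exact (this hj hi hij.symm ((hij.lt_or_gt).resolve_left hlt)).symm
    refine Set.disjoint_left.mpr ?_
    rintro ω ⟨hmi, -, hi, -⟩ ⟨-, -, -, hj⟩
    exact absurd hi (not_le.mpr (hj i hmi hlt))
  -- probability measures on trims
  have htrim0 : ∀ n, IsProbabilityMeasure (P0.trim (ℱ.le n)) := fun n =>
    ⟨by rw [trim_measurableSet_eq (ℱ.le n) MeasurableSet.univ]; exact measure_univ⟩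
  have htrim1 : ∀ n, IsProbabilityMeasure (P1.trim (ℱ.le n)) := fun n =>
    ⟨by rw [trim_measurableSet_eq (ℱ.le n) MeasurableSet.univ]; exact measure_univ⟩
  -- key Markov bound
  have hkey : ∀ n, P0 (E n) ≤ α * P1 (E n) := by
    intro n
    haveI := htrim0 n; haveI := htrim1 n
    have h1 : α⁻¹ * (P0.trim (ℱ.le n)) (E n)
        ≤ ∫⁻ ω in E n, β n ω ∂(P0.trim (ℱ.le n)) := by
      calc α⁻¹ * (P0.trim (ℱ.le n)) (E n)
          = ∫⁻ _ in E n, α⁻¹ ∂(P0.trim (ℱ.le n)) := by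
            rw [setLIntegral_const, mul_comm]
        _ ≤ ∫⁻ ω in E n, β n ω ∂(P0.trim (ℱ.le n)) := by
            refine setLIntegral_mono (hβmeas n) fun ω hω => hω.2.2.1
    have h2 : ∫⁻ ω in E n, β n ω ∂(P0.trim (ℱ.le n)) = (P1.trim (ℱ.le n)) (E n) := by
      have hfun : β n = (P1.trim (ℱ.le n)).rnDeriv (P0.trim (ℱ.le n)) := funext (hβ n)
      rw [hfun]
      exact Measure.setLIntegral_rnDeriv (hac n) (E n)
    rw [h2, trim_measurableSet_eq (ℱ.le n) (hEmeas n),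
      trim_measurableSet_eq (ℱ.le n) (hEmeas n)] at h1
    have hα0 : α ≠ 0 := hα.ne'
    have hαt : α ≠ ∞ := (lt_of_le_of_lt hα1 (by norm_num)).ne
    calc P0 (E n) = α * (α⁻¹ * P0 (E n)) := by
          rw [← mul_assoc, ENNReal.mul_inv_cancel hα0 hαt, one_mul]
      _ ≤ α * P1 (E n) := mul_le_mul_right h1 _
  rw [hUnion]
  calc P0 (⋃ n ∈ Finset.Ioc m T, E n)
      ≤ ∑ n ∈ Finset.Ioc m T, P0 (E n) := measure_biUnion_finset_le _ _
    _ ≤ ∑ n ∈ Finset.Ioc m T, α * P1 (E n) := Finset.sum_le_sum fun n _ => hkey n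
    _ = α * ∑ n ∈ Finset.Ioc m T, P1 (E n) := by rw [Finset.mul_sum]
    _ = α * P1 (⋃ n ∈ Finset.Ioc m T, E n) := by
        rw [measure_biUnion_finset hdisj fun n _ => hEmeas0 n]
    _ ≤ α * 1 := mul_le_mul_right prob_le_one _
    _ = α := mul_one _
end

section
/- Strong calibration for fixed n under group invariance: suppose the Bayes factor β_n is a function of a maximal invariant U_n and for all g ∈ G, dμ^{P_{1,g},U_n}/dμ^{P_{0,g},U_n}(U_n(x^n)) = β_n(x^n). Then for any G_n-measurable binary random variable V_n with P_{0,g}(V_n=1) > 0 and P_{1,g}(V_n=1) > 0, one can choose the Radon-Nikodym derivative so that (P_{1,g}(V_n=1)/P_{0,g}(V_n=1)) · (dμ^{P_{1,g},β_n | V_n=1}/dμ^{P_{0,g},β_n | V_n=1})(β_n(x^n)) = β_n(x^n) for all x^n. -/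
open MeasureTheory ProbabilityTheory
open scoped ENNReal

/-!
On the σ-algebra generated by the maximal invariant `U`, the hypothesis says that `P₁` has
density `β` with respect to `P₀`. Since `β` and `V` are both functions of `U`, every event
`{V = 1} ∩ {β ∈ A}` lies in that σ-algebra, so restricted to `{V = 1}` the law of `β` under `P₁`
has density `t ↦ t` with respect to its law under `P₀`. Conditioning on `{V = 1}` only rescales
both laws, which turns this density into `t ↦ (P₀(V = 1) / P₁(V = 1)) · t`.
-/

namespace MeasureTheory.Measure

variable {Y 𝒰 : Type*} [MeasurableSpace Y] [MeasurableSpace 𝒰]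

theorem apply_eq_setLIntegral_of_map_eq_withDensity {μ₀ μ₁ : Measure Y} {U : Y → 𝒰}
    (hU : Measurable U) {h : 𝒰 → ℝ≥0∞} (hh : Measurable h)
    (hmap : μ₁.map U = (μ₀.map U).withDensity h) {s : Set Y}
    (hs : MeasurableSet[MeasurableSpace.comap U inferInstance] s) :
    μ₁ s = ∫⁻ y in s, h (U y) ∂μ₀ := by
  obtain ⟨T, hT, rfl⟩ := hs
  rw [← map_apply hU hT, hmap, withDensity_apply _ hT, setLIntegral_map hT hh hU]

theorem map_eq_withDensity_id_of_forall_preimage {μ₀ μ₁ : Measure Y} {β : Y → ℝ≥0∞}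
    (hβ : Measurable β)
    (h : ∀ A, MeasurableSet A → μ₁ (β ⁻¹' A) = ∫⁻ y in β ⁻¹' A, β y ∂μ₀) :
    μ₁.map β = (μ₀.map β).withDensity id := by
  ext A hA
  rw [map_apply hβ hA, withDensity_apply _ hA, setLIntegral_map hA measurable_id hβ, h A hA]
  rfl

theorem map_restrict_eq_withDensity_id_of_map_eq_withDensity {μ₀ μ₁ : Measure Y}
    {U : Y → 𝒰} (hU : Measurable U) {h : 𝒰 → ℝ≥0∞} (hh : Measurable h)
    (hmap : μ₁.map U = (μ₀.map U).withDensity h) {β : Y → ℝ≥0∞} (hhU : ∀ y, h (U y) = β y)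
    {E : Set Y} (hE : MeasurableSet[MeasurableSpace.comap U inferInstance] E) :
    (μ₁.restrict E).map β = ((μ₀.restrict E).map β).withDensity id := by
  have hβU : β = h ∘ U := funext fun y => (hhU y).symm
  have hβ : Measurable β := hβU ▸ hh.comp hU
  refine map_eq_withDensity_id_of_forall_preimage hβ fun A hA => ?_
  have hβA : MeasurableSet[MeasurableSpace.comap U inferInstance] (β ⁻¹' A) :=
    hβU ▸ ⟨h ⁻¹' A, hh hA, rfl⟩
  rw [restrict_apply (hβ hA), restrict_restrict (hβ hA),
    apply_eq_setLIntegral_of_map_eq_withDensity hU hh hmap (hβA.inter hE)]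
  simp only [hhU]

theorem map_cond_eq_withDensity_of_map_restrict {μ₀ μ₁ : Measure Y} {β : Y → ℝ≥0∞}
    {E : Set Y} (h : (μ₁.restrict E).map β = ((μ₀.restrict E).map β).withDensity id)
    (h₀ : μ₀ E ≠ 0) (h₀' : μ₀ E ≠ ∞) :
    (μ₁[|E]).map β = ((μ₀[|E]).map β).withDensity fun t => μ₀ E / μ₁ E * t := by
  have hdensity : (fun t => μ₀ E / μ₁ E * t) = (μ₀ E / μ₁ E) • id := rfl
  rw [ProbabilityTheory.cond, ProbabilityTheory.cond, Measure.map_smul, Measure.map_smul, h, withDensity_smul_measure, hdensity,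
    withDensity_smul _ measurable_id, smul_smul, div_eq_mul_inv, ← mul_assoc,
    ENNReal.inv_mul_cancel h₀ h₀', one_mul]

end MeasureTheory.Measure

theorem strong_calibration_fixed_n_general
    {Y 𝒰 G : Type*} [MeasurableSpace Y] [MeasurableSpace 𝒰]
    (P0 P1 : G → Measure Y)
    [∀ g, IsProbabilityMeasure (P0 g)] [∀ g, IsProbabilityMeasure (P1 g)]
    (U : Y → 𝒰) (hU : Measurable U)
    (β : Y → ℝ≥0∞)
    (hBerger : ∀ g, ∃ h : 𝒰 → ℝ≥0∞, Measurable h ∧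
      Measure.map U (P1 g) = (Measure.map U (P0 g)).withDensity h ∧
      ∀ y, h (U y) = β y)
    (V : Y → Bool)
    (hV : MeasurableSet[MeasurableSpace.comap U inferInstance] {y | V y = true}) :
    ∀ g, P0 g {y | V y = true} ≠ 0 → P1 g {y | V y = true} ≠ 0 →
      ∃ f : ℝ≥0∞ → ℝ≥0∞, Measurable f ∧
        Measure.map β ((P1 g)[|{y | V y = true}]) =
          (Measure.map β ((P0 g)[|{y | V y = true}])).withDensity f ∧
        ∀ y, (P1 g {y' | V y' = true} / P0 g {y' | V y' = true}) * f (β y) = β y := by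
  intro g h0 h1
  obtain ⟨h, hh, hmap, hhU⟩ := hBerger g
  have hrestrict := Measure.map_restrict_eq_withDensity_id_of_map_eq_withDensity hU hh hmap hhU hV
  refine ⟨_, by fun_prop,
    Measure.map_cond_eq_withDensity_of_map_restrict hrestrict h0 (measure_ne_top _ _), fun y => ?_⟩
  rw [← mul_assoc, ← mul_div_assoc, ENNReal.div_mul_cancel h0 (measure_ne_top _ _),
    ENNReal.div_self h1 (measure_ne_top _ _), one_mul]

/-- Strong calibration for fixed `n` under group invariance (Lemma 3): if the Bayes
factor `β` is, for every `g`, a version of the Radon–Nikodym derivative of the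
pushforwards of the maximal invariant `U` (Berger–Dass–Varshavsky), then for every
binary `V` measurable w.r.t. the quotient σ-algebra (the σ-algebra generated by `U`)
with `P_{0,g}(V=1) > 0` and `P_{1,g}(V=1) > 0`, one can choose a version `f` of the
Radon–Nikodym derivative of the conditional pushforwards of `β` such that
`(P_{1,g}(V=1)/P_{0,g}(V=1)) · f(β x) = β x` for all `x`. -/
theorem strong_calibration_fixed_n
    {Y 𝒰 G : Type*} [MeasurableSpace Y] [MeasurableSpace 𝒰]
    (P0 P1 : G → Measure Y)
    [∀ g, IsProbabilityMeasure (P0 g)] [∀ g, IsProbabilityMeasure (P1 g)]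
    (U : Y → 𝒰) (hU : Measurable U)
    (β : Y → ℝ≥0∞) (hβ : Measurable β)
    (hBerger : ∀ g, ∃ h : 𝒰 → ℝ≥0∞, Measurable h ∧
      Measure.map U (P1 g) = (Measure.map U (P0 g)).withDensity h ∧
      ∀ y, h (U y) = β y)
    (V : Y → Bool)
    (hV : MeasurableSet[MeasurableSpace.comap U inferInstance] {y | V y = true}) :
    ∀ g, P0 g {y | V y = true} ≠ 0 → P1 g {y | V y = true} ≠ 0 →
      ∃ f : ℝ≥0∞ → ℝ≥0∞, Measurable f ∧
        Measure.map β ((P1 g)[|{y | V y = true}]) =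
          (Measure.map β ((P0 g)[|{y | V y = true}])).withDensity f ∧
        ∀ y, (P1 g {y' | V y' = true} / P0 g {y' | V y' = true}) * f (β y) = β y :=
  strong_calibration_fixed_n_general P0 P1 U hU β hBerger V hV
end

section
/- Frequentist optional stopping under group invariance: under the conditions of strong calibration (τ adapted to the quotient filtration), for all g ∈ G the stopped Bayes factor satisfies E_{P_{0,g}}[β_τ] = 1, hence P_{0,g}(1/β_τ ≤ α) ≤ α for all 0 < α ≤ 1 and all g ∈ G simultaneously. -/
open MeasureTheory
open scoped ENNReal

/-! On the event `{τ = n}`, which is determined by the maximal invariant `U n`, the Bayes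
factor `β n` is the density of `P1 g` with respect to `P0 g`. Summing over `n` gives
`E_{P0 g}[β_τ] = ∑ₙ P1 g {τ = n} = 1`, and the tail bound is Markov's inequality. -/

theorem iUnion_preimage_singleton_eq_univ {Ω ι : Type*} (τ : Ω → ι) :
    ⋃ i, τ ⁻¹' {i} = Set.univ := by
  rw [← Set.preimage_iUnion, Set.iUnion_of_singleton, Set.preimage_univ]

section

variable {Ω ι : Type*} [MeasurableSpace Ω]

theorem lintegral_comp_eq_tsum_setLIntegral_preimage_singleton [Countable ι]
    (μ : Measure Ω) {τ : Ω → ι} (hτ : ∀ i, MeasurableSet (τ ⁻¹' {i})) (f : ι → Ω → ℝ≥0∞) :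
    ∫⁻ ω, f (τ ω) ω ∂μ = ∑' i, ∫⁻ ω in τ ⁻¹' {i}, f i ω ∂μ := by
  calc ∫⁻ ω, f (τ ω) ω ∂μ = ∫⁻ ω in ⋃ i, τ ⁻¹' {i}, f (τ ω) ω ∂μ := by
        rw [iUnion_preimage_singleton_eq_univ, Measure.restrict_univ]
    _ = ∑' i, ∫⁻ ω in τ ⁻¹' {i}, f (τ ω) ω ∂μ :=
        lintegral_iUnion hτ (pairwise_disjoint_fiber τ) _
    _ = ∑' i, ∫⁻ ω in τ ⁻¹' {i}, f i ω ∂μ := by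
        congr 1 with i
        exact setLIntegral_congr_fun (hτ i) fun ω hω => by rw [hω]

theorem setLIntegral_comp_eq_of_map_eq_withDensity {𝒰 : Type*} [MeasurableSpace 𝒰]
    {μ ν : Measure Ω} {U : Ω → 𝒰} (hU : Measurable U) {h : 𝒰 → ℝ≥0∞} (hh : Measurable h)
    (hdens : ν.map U = (μ.map U).withDensity h) {A : Set Ω}
    (hA : MeasurableSet[MeasurableSpace.comap U inferInstance] A) :
    ∫⁻ ω in A, h (U ω) ∂μ = ν A := by
  obtain ⟨S, hS, rfl⟩ := hA
  rw [← setLIntegral_map hS hh hU, ← withDensity_apply h hS, ← hdens, Measure.map_apply hU hS]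

theorem measure_inv_le_le_of_lintegral_le_one {μ : Measure Ω} {X : Ω → ℝ≥0∞}
    (hX : AEMeasurable X μ) (hint : ∫⁻ ω, X ω ∂μ ≤ 1) (α : ℝ≥0∞) :
    μ {ω | (X ω)⁻¹ ≤ α} ≤ α := by
  have hmarkov : α⁻¹ * μ {ω | α⁻¹ ≤ X ω} ≤ 1 :=
    (mul_meas_ge_le_lintegral₀ hX α⁻¹).trans hint
  simp_rw [ENNReal.inv_le_iff_inv_le]
  simpa using (ENNReal.div_le_iff_le_mul (c := 1) (Or.inr ENNReal.one_ne_top)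
    (Or.inr one_ne_zero)).1 (by rwa [div_eq_mul_inv, mul_comm])

end

theorem frequentist_optional_stopping_group_invariance_general
    {Ω 𝒰 G : Type*} [MeasurableSpace Ω] [MeasurableSpace 𝒰]
    (P0 P1 : G → Measure Ω)
    [∀ g, IsProbabilityMeasure (P1 g)]
    (U : ℕ → Ω → 𝒰) (hU : ∀ n, Measurable (U n))
    (β : ℕ → Ω → ℝ≥0∞) (hβmeas : ∀ n, Measurable (β n))
    (hBerger : ∀ g n, ∃ h : 𝒰 → ℝ≥0∞, Measurable h ∧
      Measure.map (U n) (P1 g) = (Measure.map (U n) (P0 g)).withDensity h ∧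
      ∀ ω, h (U n ω) = β n ω)
    (τ : Ω → ℕ) (hτmeas : Measurable τ)
    (hτadapted : ∀ n,
      MeasurableSet[MeasurableSpace.comap (U n) inferInstance] {ω | τ ω = n}) :
    ∀ g, (∫⁻ ω, β (τ ω) ω ∂(P0 g)) = 1 ∧
      ∀ α : ℝ≥0∞, 0 < α → α ≤ 1 → P0 g {ω | (β (τ ω) ω)⁻¹ ≤ α} ≤ α := by
  intro g
  have hτ : ∀ n, MeasurableSet (τ ⁻¹' {n}) := fun n => hτmeas (measurableSet_singleton n)
  have hcalibration : ∀ n, ∫⁻ ω in τ ⁻¹' {n}, β n ω ∂(P0 g) = P1 g (τ ⁻¹' {n}) := by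
    intro n
    obtain ⟨h, hh, hdens, hβ⟩ := hBerger g n
    simp_rw [← hβ]
    exact setLIntegral_comp_eq_of_map_eq_withDensity (hU n) hh hdens (hτadapted n)
  have hexpectation : ∫⁻ ω, β (τ ω) ω ∂(P0 g) = 1 := by
    rw [lintegral_comp_eq_tsum_setLIntegral_preimage_singleton _ hτ, tsum_congr hcalibration,
      ← measure_iUnion (pairwise_disjoint_fiber τ) hτ,
      iUnion_preimage_singleton_eq_univ, measure_univ]
  have hβτ : Measurable fun ω => β (τ ω) ω :=
    (measurable_from_prod_countable_left (f := fun p : Ω × ℕ => β p.2 p.1) hβmeas).comp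
      (measurable_id.prodMk hτmeas)
  exact ⟨hexpectation, fun α _ _ =>
    measure_inv_le_le_of_lintegral_le_one hβτ.aemeasurable hexpectation.le α⟩

/-- Frequentist optional stopping under group invariance (Theorem 2): in the
group-invariant setting with the stopping time `τ` adapted to the quotient filtration,
for all `g ∈ G` the stopped Bayes factor satisfies `E_{P_{0,g}}[β_τ] = 1`, and hence
`P_{0,g}(1/β_τ ≤ α) ≤ α` for all `0 < α ≤ 1`, simultaneously for all `g ∈ G`. -/
theorem frequentist_optional_stopping_group_invariance
    {Ω 𝒰 G : Type*} [MeasurableSpace Ω] [MeasurableSpace 𝒰]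
    (P0 P1 : G → Measure Ω)
    [∀ g, IsProbabilityMeasure (P0 g)] [∀ g, IsProbabilityMeasure (P1 g)]
    (U : ℕ → Ω → 𝒰) (hU : ∀ n, Measurable (U n))
    (β : ℕ → Ω → ℝ≥0∞) (hβmeas : ∀ n, Measurable (β n)) (hβpos : ∀ n ω, 0 < β n ω)
    (hBerger : ∀ g n, ∃ h : 𝒰 → ℝ≥0∞, Measurable h ∧
      Measure.map (U n) (P1 g) = (Measure.map (U n) (P0 g)).withDensity h ∧
      ∀ ω, h (U n ω) = β n ω)
    (τ : Ω → ℕ) (hτmeas : Measurable τ)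
    (hτadapted : ∀ n,
      MeasurableSet[MeasurableSpace.comap (U n) inferInstance] {ω | τ ω = n}) :
    ∀ g, (∫⁻ ω, β (τ ω) ω ∂(P0 g)) = 1 ∧
      ∀ α : ℝ≥0∞, 0 < α → α ≤ 1 → P0 g {ω | (β (τ ω) ω)⁻¹ ≤ α} ≤ α :=
  frequentist_optional_stopping_group_invariance_general P0 P1 U hU β hβmeas hBerger τ hτmeas
    hτadapted
end
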